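/- arXiv:math/0508158 — 12 statements merged into one kernel-verified Lean document; each statement's English description precedes it below -/
import Mathlib

section
/- The constant 1/2 in the inequality ⟨x,a⟩_i ≥ (1/2)(‖a‖² − ‖x−a‖²) is sharp: if C > 0 is such that ⟨x,a⟩_i ≥ C(‖a‖² − ‖x−a‖²) for all x, a in X with ‖a‖ > ‖x−a‖ (where X is a nontrivial real normed space), then C ≤ 1/2. -/
noncomputable def innerInf {X : Type*} [NormedAddCommGroup X] [NormedSpace ℝ X] (x a : X) : ℝ :=
  sSup ((fun s : ℝ => (‖a + s • x‖ ^ 2 - ‖a‖ ^ 2) / (2 * s)) '' Set.Iio 0)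

theorem stmt2 {X : Type*} [NormedAddCommGroup X] [NormedSpace ℝ X] [Nontrivial X]
    (C : ℝ) (hC : 0 < C)
    (h : ∀ x a : X, ‖x - a‖ < ‖a‖ → innerInf x a ≥ C * (‖a‖ ^ 2 - ‖x - a‖ ^ 2)) :
    C ≤ 1 / 2 := by
  by_contra hle
  push_neg at hle
  obtain ⟨a, ha⟩ := exists_ne (0 : X)
  set ε : ℝ := min (1/2) ((2*C - 1)/(2*C)) with hεdef
  have hC2 : (0:ℝ) < 2*C - 1 := by linarith
  have hεpos : 0 < ε := lt_min (by norm_num) (by positivity)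
  have hε1 : ε < 1 := lt_of_le_of_lt (min_le_left _ _) (by norm_num)
  have hCε : C * ε ≤ (2*C - 1)/2 := by
    have h1 : ε ≤ (2*C-1)/(2*C) := min_le_right _ _
    have h2 : C * ε ≤ C * ((2*C-1)/(2*C)) := by nlinarith
    have h3 : C * ((2*C-1)/(2*C)) = (2*C-1)/2 := by
      field_simp
    linarith
  have hna : 0 < ‖a‖ := norm_pos_iff.mpr ha
  have hnorm : ‖ε • a - a‖ = (1 - ε) * ‖a‖ := by
    have h1 : ε • a - a = (ε - 1) • a := by module
    rw [h1, norm_smul, Real.norm_eq_abs, abs_of_neg (by linarith : ε - 1 < 0)]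
    ring
  have hxa : ‖ε • a - a‖ < ‖a‖ := by
    rw [hnorm]; nlinarith
  have hub : innerInf (ε • a) a ≤ ε * ‖a‖^2 := by
    apply Real.sSup_le
    · rintro b ⟨s, hs, rfl⟩
      simp only [Set.mem_Iio] at hs
      dsimp only
      have h1 : a + s • ε • a = (1 + s*ε) • a := by module
      rw [h1, norm_smul, Real.norm_eq_abs, mul_pow, sq_abs]
      rw [div_le_iff_of_neg (by linarith : 2*s < 0)]
      nlinarith [sq_nonneg (s*ε), sq_nonneg ‖a‖]
    · positivity
  have hlb := h (ε • a) a hxa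
  rw [hnorm] at hlb
  nlinarith [mul_pos hεpos (mul_pos hna hna), sq_nonneg ‖a‖]
end

section
/- In a real normed linear space, if x, a ∈ X satisfy ‖a‖ ≥ ‖x − a‖, then ⟨x,a⟩_i ≥ (1/2)‖x‖(‖a‖ − ‖x−a‖). -/
theorem stmt3 {X : Type*} [NormedAddCommGroup X] [NormedSpace ℝ X] (x a : X)
    (h : ‖x - a‖ ≤ ‖a‖) :
    innerInf x a ≥ (1 / 2) * ‖x‖ * (‖a‖ - ‖x - a‖) := by
  have hbdd : BddAbove ((fun s : ℝ => (‖a + s • x‖ ^ 2 - ‖a‖ ^ 2) / (2 * s)) '' Set.Iio 0) := by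
    refine ⟨‖x‖ * ‖a‖, ?_⟩
    rintro y ⟨s, hs, rfl⟩
    simp only [Set.mem_Iio] at hs
    have hts : |‖a + s • x‖ - ‖a‖| ≤ ‖s • x‖ := by
      simpa using abs_norm_sub_norm_le (a + s • x) a
    rw [norm_smul, Real.norm_eq_abs, abs_of_neg hs] at hts
    have habs := abs_le.mp hts
    have ht0 : (0:ℝ) ≤ ‖a + s • x‖ := norm_nonneg _
    have hb0 : (0:ℝ) ≤ ‖a‖ := norm_nonneg _
    have hx0 : (0:ℝ) ≤ ‖x‖ := norm_nonneg _
    rw [div_le_iff_of_neg (by linarith : 2 * s < 0)]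
    rcases le_or_gt ‖a‖ ‖a + s • x‖ with hc | hc
    · nlinarith
    · nlinarith
  have hmem : (‖a + (-1:ℝ) • x‖ ^ 2 - ‖a‖ ^ 2) / (2 * (-1:ℝ)) ∈
      ((fun s : ℝ => (‖a + s • x‖ ^ 2 - ‖a‖ ^ 2) / (2 * s)) '' Set.Iio 0) :=
    ⟨-1, by norm_num, rfl⟩
  have hle := le_csSup hbdd hmem
  have hn : ‖a + (-1:ℝ) • x‖ = ‖x - a‖ := by
    rw [neg_one_smul]
    rw [show a + -x = -(x - a) by abel, norm_neg]
  rw [hn] at hle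
  have htri : ‖x‖ ≤ ‖x - a‖ + ‖a‖ := by
    calc ‖x‖ = ‖(x - a) + a‖ := by rw [sub_add_cancel]
    _ ≤ ‖x - a‖ + ‖a‖ := norm_add_le _ _
  have hval : (‖x - a‖ ^ 2 - ‖a‖ ^ 2) / (2 * (-1:ℝ)) = (‖a‖ ^ 2 - ‖x - a‖ ^ 2) / 2 := by ring
  rw [hval] at hle
  refine le_trans ?_ hle
  nlinarith [norm_nonneg x, norm_nonneg (x - a)]
end

section
/- Let X be a real normed linear space, x₁,…,xₙ ∈ X, a ∈ X with a ≠ 0, and p₁,…,pₙ ≥ 0 with Σⱼ pⱼ = 1. Then ‖Σⱼ pⱼ•xⱼ‖·‖a‖ + (1/2)·Σⱼ pⱼ‖xⱼ − a‖² ≥ (1/2)‖a‖². -/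
/-!
With `m = ∑ pⱼ • xⱼ`, Jensen's inequality for the convex function `‖· - a‖ ^ 2` bounds
`‖m - a‖ ^ 2` by `∑ pⱼ * ‖xⱼ - a‖ ^ 2`. It then remains to see
`‖a‖ ^ 2 / 2 ≤ ‖m‖ * ‖a‖ + ‖m - a‖ ^ 2 / 2`, which follows from `|‖a‖ - ‖m‖| ≤ ‖m - a‖`
because `‖m‖ * ‖a‖ + (‖a‖ - ‖m‖) ^ 2 / 2 = (‖a‖ ^ 2 + ‖m‖ ^ 2) / 2`.
-/

open Finset

section

variable {E : Type*} [SeminormedAddCommGroup E] [NormedSpace ℝ E]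

theorem convexOn_sq_norm_sub (a : E) : ConvexOn ℝ Set.univ fun x => ‖x - a‖ ^ 2 := by
  have h : ConvexOn ℝ Set.univ fun x : E => ‖x + -a‖ :=
    (convexOn_norm convex_univ).translate_left (-a)
  simpa only [Pi.pow_def, ← sub_eq_add_neg] using h.pow (fun _ _ => norm_nonneg _) 2

theorem sq_norm_sum_smul_sub_le {ι : Type*} (s : Finset ι) (w : ι → ℝ) (x : ι → E) (a : E)
    (hw : ∀ i ∈ s, 0 ≤ w i) (hw1 : ∑ i ∈ s, w i = 1) :
    ‖∑ i ∈ s, w i • x i - a‖ ^ 2 ≤ ∑ i ∈ s, w i * ‖x i - a‖ ^ 2 :=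
  (convexOn_sq_norm_sub a).map_sum_le hw hw1 fun _ _ => Set.mem_univ _

end

theorem half_sq_norm_le_norm_mul_norm_add_half_sq_norm_sub {E : Type*} [SeminormedAddCommGroup E]
    (m a : E) : 1 / 2 * ‖a‖ ^ 2 ≤ ‖m‖ * ‖a‖ + 1 / 2 * ‖m - a‖ ^ 2 := by
  have habs : |‖a‖ - ‖m‖| ≤ ‖m - a‖ := norm_sub_rev m a ▸ abs_norm_sub_norm_le a m
  have hsq : (‖a‖ - ‖m‖) ^ 2 ≤ ‖m - a‖ ^ 2 :=
    sq_abs (‖a‖ - ‖m‖) ▸ pow_le_pow_left₀ (abs_nonneg _) habs 2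
  nlinarith [sq_nonneg ‖m‖]

theorem stmt4_general {X : Type*} [NormedAddCommGroup X] [NormedSpace ℝ X]
    (n : ℕ) (x : Fin n → X) (a : X)
    (p : Fin n → ℝ) (hp : ∀ j, 0 ≤ p j) (hp1 : ∑ j, p j = 1) :
    ‖∑ j, p j • x j‖ * ‖a‖ + (1 / 2) * ∑ j, p j * ‖x j - a‖ ^ 2 ≥ (1 / 2) * ‖a‖ ^ 2 := by
  have hJensen := sq_norm_sum_smul_sub_le univ p x a (fun j _ => hp j) hp1
  have hnorm := half_sq_norm_le_norm_mul_norm_add_half_sq_norm_sub (∑ j, p j • x j) a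
  linarith

theorem stmt4 {X : Type*} [NormedAddCommGroup X] [NormedSpace ℝ X]
    (n : ℕ) (x : Fin n → X) (a : X) (ha : a ≠ 0)
    (p : Fin n → ℝ) (hp : ∀ j, 0 ≤ p j) (hp1 : ∑ j, p j = 1) :
    ‖∑ j, p j • x j‖ * ‖a‖ + (1 / 2) * ∑ j, p j * ‖x j - a‖ ^ 2 ≥ (1 / 2) * ‖a‖ ^ 2 :=
  stmt4_general n x a p hp hp1
end

section
/- The constant 1/2 on the right-hand side of the inequality ‖Σ pⱼxⱼ‖‖a‖ + (1/2)Σ pⱼ‖xⱼ−a‖² ≥ (1/2)‖a‖² is best possible: if D > 0 satisfies ‖Σⱼ pⱼ•xⱼ‖·‖a‖ + (1/2)Σⱼ pⱼ‖xⱼ−a‖² ≥ D‖a‖² for all n ≥ 1, all xⱼ ∈ X, nonnegative weights pⱼ summing to 1, and all a ≠ 0, then D ≤ 1/2. -/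
theorem stmt5 {X : Type*} [NormedAddCommGroup X] [NormedSpace ℝ X] [Nontrivial X]
    (D : ℝ) (hD : 0 < D)
    (h : ∀ (n : ℕ), 1 ≤ n → ∀ (x : Fin n → X) (p : Fin n → ℝ) (a : X),
      (∀ j, 0 ≤ p j) → ∑ j, p j = 1 → a ≠ 0 →
      ‖∑ j, p j • x j‖ * ‖a‖ + (1 / 2) * ∑ j, p j * ‖x j - a‖ ^ 2 ≥ D * ‖a‖ ^ 2) :
    D ≤ 1 / 2 := by
  obtain ⟨a, ha⟩ := exists_ne (0 : X)
  have hna : 0 < ‖a‖ := norm_pos_iff.mpr ha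
  -- key estimate: for every ε > 0, D ≤ 1/2 + ε²/2
  have key : ∀ ε : ℝ, 0 < ε → D ≤ 1 / 2 + ε ^ 2 / 2 := by
    intro ε hε
    have := h 1 le_rfl (fun _ => ε • a) (fun _ => 1) a (fun _ => zero_le_one)
      (by simp) ha
    simp only [Fin.sum_univ_one, one_smul, one_mul] at this
    have h1 : ‖ε • a‖ = ε * ‖a‖ := by
      rw [norm_smul, Real.norm_eq_abs, abs_of_pos hε]
    have h2 : ‖ε • a - a‖ = |ε - 1| * ‖a‖ := by
      have : ε • a - a = (ε - 1) • a := by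
        rw [sub_smul, one_smul]
      rw [this, norm_smul, Real.norm_eq_abs]
    rw [h1, h2] at this
    have hexp : ε * ‖a‖ * ‖a‖ + 1 / 2 * (|ε - 1| * ‖a‖) ^ 2
        = (ε + 1 / 2 * (ε - 1) ^ 2) * ‖a‖ ^ 2 := by
      rw [mul_pow, sq_abs]; ring
    rw [hexp] at this
    have hle : D ≤ ε + 1 / 2 * (ε - 1) ^ 2 :=
      le_of_mul_le_mul_right this (by positivity : 0 < ‖a‖ ^ 2)
    nlinarith
  by_contra hcon
  push_neg at hcon
  have hε : 0 < Real.sqrt (D - 1 / 2) := Real.sqrt_pos.mpr (by linarith)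
  have := key _ hε
  rw [Real.sq_sqrt (by linarith : (0:ℝ) ≤ D - 1/2)] at this
  linarith
end

section
/- Let X be a real normed linear space, a ∈ X with a ≠ 0, and x₁,…,xₙ ∈ X with ‖xⱼ − a‖ ≤ ‖a‖ for each j. Then for any pⱼ ≥ 0 with Σⱼ pⱼ = 1: ‖Σⱼ pⱼ•xⱼ‖·‖a‖ + (1/2)Σⱼ pⱼ‖xⱼ‖·‖xⱼ − a‖ ≥ (1/2)‖a‖·Σⱼ pⱼ‖xⱼ‖. -/
/-!
Take a Hahn–Banach functional `f` with `‖f‖ ≤ 1` and `f a = ‖a‖`. For each `j`, with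
`dⱼ = ‖xⱼ - a‖ ≤ ‖a‖`, we have `f xⱼ ≥ ‖a‖ - dⱼ ≥ 0` and `‖xⱼ‖ ≤ 2‖a‖`, hence
`‖xⱼ‖ (‖a‖ - dⱼ) ≤ 2‖a‖ f xⱼ`. Averaging with the weights `pⱼ` and using
`f (∑ pⱼ xⱼ) ≤ ‖∑ pⱼ xⱼ‖` gives the inequality.
-/

open Finset

section

variable {E : Type*} [NormedAddCommGroup E] [NormedSpace ℝ E]

theorem StrongDual.apply_le_norm_of_norm_le_one {f : StrongDual ℝ E} (hf : ‖f‖ ≤ 1) (y : E) :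
    f y ≤ ‖y‖ :=
  (le_abs_self _).trans <| by simpa using f.le_of_opNorm_le hf y

theorem StrongDual.norm_mul_sub_le_two_mul_norm_mul_apply {f : StrongDual ℝ E} (hf : ‖f‖ ≤ 1)
    {a x : E} (hfa : f a = ‖a‖) (hx : ‖x - a‖ ≤ ‖a‖) :
    ‖x‖ * (‖a‖ - ‖x - a‖) ≤ 2 * ‖a‖ * f x := by
  have hfx : ‖a‖ - ‖x - a‖ ≤ f x := by
    have := apply_le_norm_of_norm_le_one hf (a - x)
    rw [map_sub, hfa, norm_sub_rev] at this
    linarith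
  have hnx : ‖x‖ ≤ 2 * ‖a‖ := by
    linarith [norm_le_norm_sub_add x a]
  calc ‖x‖ * (‖a‖ - ‖x - a‖) ≤ 2 * ‖a‖ * (‖a‖ - ‖x - a‖) :=
        mul_le_mul_of_nonneg_right hnx (sub_nonneg.2 hx)
    _ ≤ 2 * ‖a‖ * f x := mul_le_mul_of_nonneg_left hfx (by positivity)

end

theorem stmt6_general {X : Type*} [NormedAddCommGroup X] [NormedSpace ℝ X]
    (n : ℕ) (x : Fin n → X) (a : X)
    (hx : ∀ j, ‖x j - a‖ ≤ ‖a‖)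
    (p : Fin n → ℝ) (hp : ∀ j, 0 ≤ p j) :
    ‖∑ j, p j • x j‖ * ‖a‖ + (1 / 2) * ∑ j, p j * ‖x j‖ * ‖x j - a‖ ≥
      (1 / 2) * ‖a‖ * ∑ j, p j * ‖x j‖ := by
  obtain ⟨f, hf, hfa⟩ := exists_dual_vector'' ℝ a
  replace hfa : f a = ‖a‖ := hfa
  have hsum : ∑ j, p j * (‖x j‖ * (‖a‖ - ‖x j - a‖)) ≤ 2 * ‖a‖ * f (∑ j, p j • x j) := by
    simp only [map_sum, map_smul, smul_eq_mul, mul_sum]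
    refine sum_le_sum fun j _ => ?_
    nlinarith [hp j, f.norm_mul_sub_le_two_mul_norm_mul_apply hf hfa (hx j)]
  have hS : 2 * ‖a‖ * f (∑ j, p j • x j) ≤ 2 * ‖a‖ * ‖∑ j, p j • x j‖ :=
    mul_le_mul_of_nonneg_left (f.apply_le_norm_of_norm_le_one hf _) (by positivity)
  have hexpand : ∑ j, p j * (‖x j‖ * (‖a‖ - ‖x j - a‖)) =
      ‖a‖ * ∑ j, p j * ‖x j‖ - ∑ j, p j * ‖x j‖ * ‖x j - a‖ := by
    rw [mul_sum, ← sum_sub_distrib]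
    exact sum_congr rfl fun j _ => by ring
  linarith

theorem stmt6 {X : Type*} [NormedAddCommGroup X] [NormedSpace ℝ X]
    (n : ℕ) (x : Fin n → X) (a : X) (ha : a ≠ 0)
    (hx : ∀ j, ‖x j - a‖ ≤ ‖a‖)
    (p : Fin n → ℝ) (hp : ∀ j, 0 ≤ p j) (hp1 : ∑ j, p j = 1) :
    ‖∑ j, p j • x j‖ * ‖a‖ + (1 / 2) * ∑ j, p j * ‖x j‖ * ‖x j - a‖ ≥
      (1 / 2) * ‖a‖ * ∑ j, p j * ‖x j‖ :=
  stmt6_general n x a hx p hp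
end

section
/- Let X be a real normed linear space, a ≠ 0, and x₁,…,xₙ nonzero vectors with ‖a‖ ≥ ‖xⱼ − a‖ for each j. Then for any pⱼ ≥ 0 with Σⱼ pⱼ = 1: ‖Σⱼ pⱼ•xⱼ‖ / (Σⱼ pⱼ‖xⱼ‖) ≥ (1/2)·min_{1≤j≤n} (‖a‖² − ‖a − xⱼ‖²)/(‖xⱼ‖‖a‖), provided Σⱼ pⱼ‖xⱼ‖ > 0. -/
theorem stmt7 {X : Type*} [NormedAddCommGroup X] [NormedSpace ℝ X]
    (n : ℕ) (hn : 0 < n) (x : Fin n → X) (hx0 : ∀ j, x j ≠ 0)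
    (a : X) (ha : a ≠ 0) (hx : ∀ j, ‖x j - a‖ ≤ ‖a‖)
    (p : Fin n → ℝ) (hp : ∀ j, 0 ≤ p j) (hp1 : ∑ j, p j = 1)
    (hpos : 0 < ∑ j, p j * ‖x j‖) :
    ‖∑ j, p j • x j‖ / (∑ j, p j * ‖x j‖) ≥
      (1 / 2) * (Finset.univ.inf' (Finset.univ_nonempty_iff.mpr ⟨⟨0, hn⟩⟩)
        (fun j => (‖a‖ ^ 2 - ‖a - x j‖ ^ 2) / (‖x j‖ * ‖a‖))) := by
  set m := (Finset.univ.inf' (Finset.univ_nonempty_iff.mpr ⟨⟨0, hn⟩⟩)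
        (fun j => (‖a‖ ^ 2 - ‖a - x j‖ ^ 2) / (‖x j‖ * ‖a‖))) with hm
  rw [ge_iff_le, le_div_iff₀ hpos]
  have ha0 : (0:ℝ) < ‖a‖ := norm_pos_iff.mpr ha
  -- pointwise bound
  have key : ∀ j, 1 / 2 * m * ‖x j‖ ≤ ‖a‖ - ‖a - x j‖ := by
    intro j
    have hxj : (0:ℝ) < ‖x j‖ := norm_pos_iff.mpr (hx0 j)
    have hmj : m ≤ (‖a‖ ^ 2 - ‖a - x j‖ ^ 2) / (‖x j‖ * ‖a‖) :=
      Finset.inf'_le _ (Finset.mem_univ j)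
    have hmj' : m * (‖x j‖ * ‖a‖) ≤ ‖a‖ ^ 2 - ‖a - x j‖ ^ 2 :=
      (le_div_iff₀ (by positivity)).mp hmj
    have hd : ‖a - x j‖ ≤ ‖a‖ := by rw [norm_sub_rev]; exact hx j
    have hd0 : (0:ℝ) ≤ ‖a - x j‖ := norm_nonneg _
    nlinarith [sq_nonneg (‖a‖ - ‖a - x j‖)]
  -- sum the bound
  have hsum : 1 / 2 * m * (∑ j, p j * ‖x j‖) ≤ ∑ j, p j * (‖a‖ - ‖a - x j‖) := by
    rw [Finset.mul_sum]
    apply Finset.sum_le_sum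
    intro j _
    have := key j
    have hpj := hp j
    nlinarith
  have tri : ‖a - ∑ j, p j • x j‖ ≤ ∑ j, p j * ‖a - x j‖ := by
    have : a - ∑ j, p j • x j = ∑ j, p j • (a - x j) := by
      simp [smul_sub, Finset.sum_sub_distrib, ← Finset.sum_smul, hp1]
    rw [this]
    calc ‖∑ j, p j • (a - x j)‖ ≤ ∑ j, ‖p j • (a - x j)‖ := norm_sum_le _ _
      _ = ∑ j, p j * ‖a - x j‖ := by
          apply Finset.sum_congr rfl
          intro j _
          rw [norm_smul, Real.norm_of_nonneg (hp j)]
  have tri2 : ‖a‖ - ‖∑ j, p j • x j‖ ≤ ‖a - ∑ j, p j • x j‖ := by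
    have := norm_sub_norm_le a (∑ j, p j • x j)
    linarith [abs_le.mp (abs_norm_sub_norm_le a (∑ j, p j • x j))]
  have hrhs : ∑ j, p j * (‖a‖ - ‖a - x j‖) = ‖a‖ - ∑ j, p j * ‖a - x j‖ := by
    simp [mul_sub, Finset.sum_sub_distrib, ← Finset.sum_mul, hp1]
  linarith [hsum, tri, tri2, hrhs]
end

section
/- The constant 1/2 in Theorem on the reverse triangle inequality is sharp: if X is a real normed space with a nonzero vector and E > 0 satisfies ‖Σⱼ pⱼ•xⱼ‖/(Σⱼpⱼ‖xⱼ‖) ≥ E·min_j (‖a‖² − ‖a−xⱼ‖²)/(‖xⱼ‖‖a‖) for all admissible configurations (nonzero xⱼ, nonzero a with ‖a‖ ≥ ‖xⱼ−a‖, nonnegative weights summing to 1), then E ≤ 1/2. -/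
/-! Test the inequality on the one-point configuration `x₁ = ε • a`, `p₁ = 1`: the left side is `1`
and the minimum is `(‖a‖² - (1 - ε)²‖a‖²) / (ε‖a‖²) = 2 - ε`, so `E (2 - ε) ≤ 1`; let `ε → 0⁺`. -/

open Filter Topology

lemma norm_sub_smul_self {X : Type*} [SeminormedAddCommGroup X] [NormedSpace ℝ X] (a : X)
    {ε : ℝ} (hε : ε ≤ 1) : ‖a - ε • a‖ = (1 - ε) * ‖a‖ := by
  rw [show a - ε • a = (1 - ε) • a by rw [sub_smul, one_smul], norm_smul, Real.norm_of_nonneg (sub_nonneg.mpr hε)]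

lemma norm_sq_sub_norm_sub_smul_sq_div {X : Type*} [NormedAddCommGroup X] [NormedSpace ℝ X]
    {a : X} (ha : a ≠ 0) {ε : ℝ} (hε : 0 < ε) (hε1 : ε ≤ 1) :
    (‖a‖ ^ 2 - ‖a - ε • a‖ ^ 2) / (‖ε • a‖ * ‖a‖) = 2 - ε := by
  have hna : ‖a‖ ≠ 0 := norm_ne_zero_iff.mpr ha
  rw [norm_sub_smul_self a hε1, norm_smul, Real.norm_of_nonneg hε.le]
  field_simp
  ring

lemma le_half_of_forall_mul_two_sub_le {E : ℝ} (h : ∀ ε, 0 < ε → ε < 1 → E * (2 - ε) ≤ 1) :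
    E ≤ 1 / 2 := by
  have hlim : Tendsto (fun ε : ℝ => E * (2 - ε)) (𝓝[>] 0) (𝓝 (E * 2)) := by
    refine ((Continuous.tendsto' ?_ 0 _ (by simp)).mono_left nhdsWithin_le_nhds)
    fun_prop
  have : E * 2 ≤ 1 := le_of_tendsto hlim <| by
    filter_upwards [Ioo_mem_nhdsGT zero_lt_one] with ε hε using h ε hε.1 hε.2
  linarith

theorem stmt8_general {X : Type*} [NormedAddCommGroup X] [NormedSpace ℝ X] [Nontrivial X]
    (E : ℝ)
    (h : ∀ (n : ℕ) (hn : 0 < n) (x : Fin n → X) (p : Fin n → ℝ) (a : X),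
      (∀ j, x j ≠ 0) → a ≠ 0 → (∀ j, ‖x j - a‖ ≤ ‖a‖) →
      (∀ j, 0 ≤ p j) → ∑ j, p j = 1 →
      ‖∑ j, p j • x j‖ / (∑ j, p j * ‖x j‖) ≥
        E * (Finset.univ.inf' (Finset.univ_nonempty_iff.mpr ⟨⟨0, hn⟩⟩)
          (fun j => (‖a‖ ^ 2 - ‖a - x j‖ ^ 2) / (‖x j‖ * ‖a‖)))) :
    E ≤ 1 / 2 := by
  obtain ⟨a, ha⟩ := exists_ne (0 : X)
  refine le_half_of_forall_mul_two_sub_le fun ε hε hε1 => ?_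
  have hεa : ε • a ≠ 0 := smul_ne_zero hε.ne' ha
  have hclose : ‖ε • a - a‖ ≤ ‖a‖ := by
    rw [norm_sub_rev, norm_sub_smul_self a hε1.le]
    nlinarith [norm_nonneg a]
  have hineq := h 1 one_pos (fun _ => ε • a) (fun _ => 1) a (fun _ => hεa) ha (fun _ => hclose)
    (fun _ => zero_le_one) (by simp)
  rwa [Finset.inf'_const, norm_sq_sub_norm_sub_smul_sq_div ha hε hε1.le, Fin.sum_univ_one,
    Fin.sum_univ_one, one_smul, one_mul, div_self (norm_ne_zero_iff.mpr hεa)] at hineq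

theorem stmt8 {X : Type*} [NormedAddCommGroup X] [NormedSpace ℝ X] [Nontrivial X]
    (E : ℝ) (hE : 0 < E)
    (h : ∀ (n : ℕ) (hn : 0 < n) (x : Fin n → X) (p : Fin n → ℝ) (a : X),
      (∀ j, x j ≠ 0) → a ≠ 0 → (∀ j, ‖x j - a‖ ≤ ‖a‖) →
      (∀ j, 0 ≤ p j) → ∑ j, p j = 1 →
      ‖∑ j, p j • x j‖ / (∑ j, p j * ‖x j‖) ≥
        E * (Finset.univ.inf' (Finset.univ_nonempty_iff.mpr ⟨⟨0, hn⟩⟩)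
          (fun j => (‖a‖ ^ 2 - ‖a - x j‖ ^ 2) / (‖x j‖ * ‖a‖)))) :
    E ≤ 1 / 2 :=
  stmt8_general E h
end

section
/- Let X be a real normed linear space, a ≠ 0, x₁,…,xₙ nonzero with ‖xⱼ − a‖ ≤ ‖a‖ for each j, and pⱼ ≥ 0 with Σpⱼ = 1 and Σⱼpⱼ‖xⱼ‖ > 0. Then ‖Σⱼ pⱼ•xⱼ‖ / (Σⱼ pⱼ‖xⱼ‖) ≥ (‖a‖ − max_{1≤j≤n}‖xⱼ − a‖)/(2‖a‖). -/
theorem stmt9 {X : Type*} [NormedAddCommGroup X] [NormedSpace ℝ X]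
    (n : ℕ) (hn : 0 < n) (x : Fin n → X) (hx0 : ∀ j, x j ≠ 0)
    (a : X) (ha : a ≠ 0) (hx : ∀ j, ‖x j - a‖ ≤ ‖a‖)
    (p : Fin n → ℝ) (hp : ∀ j, 0 ≤ p j) (hp1 : ∑ j, p j = 1)
    (hpos : 0 < ∑ j, p j * ‖x j‖) :
    ‖∑ j, p j • x j‖ / (∑ j, p j * ‖x j‖) ≥
      (‖a‖ - Finset.univ.sup' (Finset.univ_nonempty_iff.mpr ⟨⟨0, hn⟩⟩)
        (fun j => ‖x j - a‖)) / (2 * ‖a‖) := by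
  set M := Finset.univ.sup' (Finset.univ_nonempty_iff.mpr ⟨⟨0, hn⟩⟩)
      (fun j => ‖x j - a‖) with hM
  have hMa : M ≤ ‖a‖ := Finset.sup'_le _ _ fun j _ => hx j
  have hjM : ∀ j, ‖x j - a‖ ≤ M := fun j =>
    Finset.le_sup' (fun j => ‖x j - a‖) (Finset.mem_univ j)
  -- ∑ p j • x j - a = ∑ p j • (x j - a)
  have key : (∑ j, p j • x j) - a = ∑ j, p j • (x j - a) := by
    rw [Finset.sum_congr rfl (fun j _ => smul_sub (p j) (x j) a),
      Finset.sum_sub_distrib, ← Finset.sum_smul, hp1, one_smul]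
  have hdiff : ‖(∑ j, p j • x j) - a‖ ≤ M := by
    rw [key]
    calc ‖∑ j, p j • (x j - a)‖ ≤ ∑ j, ‖p j • (x j - a)‖ := norm_sum_le _ _
      _ ≤ ∑ j, p j * M := by
          refine Finset.sum_le_sum fun j _ => ?_
          rw [norm_smul, Real.norm_of_nonneg (hp j)]
          exact mul_le_mul_of_nonneg_left (hjM j) (hp j)
      _ = M := by rw [← Finset.sum_mul, hp1, one_mul]
  have hnum : ‖a‖ - M ≤ ‖∑ j, p j • x j‖ := by
    have h1 := norm_sub_norm_le a (∑ j, p j • x j)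
    rw [norm_sub_rev] at h1
    linarith
  have hden : (∑ j, p j * ‖x j‖) ≤ 2 * ‖a‖ := by
    calc (∑ j, p j * ‖x j‖) ≤ ∑ j, p j * (2 * ‖a‖) := by
          refine Finset.sum_le_sum fun j _ => ?_
          refine mul_le_mul_of_nonneg_left ?_ (hp j)
          have := norm_sub_norm_le (x j) a
          have h2 := hx j
          linarith [abs_le.mp (abs_norm_sub_norm_le (x j) a)]
      _ = 2 * ‖a‖ := by rw [← Finset.sum_mul, hp1, one_mul]
  exact div_le_div₀ (norm_nonneg _) hnum hpos hden
end

section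
/- Let X be a real normed linear space, a ∈ X with ‖a‖ = 1, and x₁,…,xₙ nonzero vectors with ‖xⱼ − a‖ ≤ 1 for each j. For pⱼ ≥ 0 with Σpⱼ = 1 and Σpⱼ‖xⱼ‖ > 0: ‖Σⱼ pⱼ•xⱼ‖/(Σⱼ pⱼ‖xⱼ‖) ≥ (1/2)·min_j (1 − ‖xⱼ − a‖²)/‖xⱼ‖. -/
/-!
By Hahn–Banach there is a norming functional `f` with `‖f‖ = 1` and `f a = 1`. Writing
`t = ‖x - a‖ ≤ 1`, it gives `f x ≥ 1 - t ≥ (1 - t²) / 2`, and averaging these lower bounds with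
the weights `p` gives `‖∑ p • x‖ ≥ f (∑ p • x) ≥ (m / 2) ∑ p ‖x‖` for the minimum `m` in question.
-/

open Finset

section

variable {X : Type*} [NormedAddCommGroup X] [NormedSpace ℝ X]

lemma one_sub_norm_sub_le_apply {f : StrongDual ℝ X} (hf : ‖f‖ ≤ 1) {a : X} (hfa : f a = 1)
    (x : X) : 1 - ‖x - a‖ ≤ f x := by
  have h : f (a - x) ≤ ‖a - x‖ :=
    (le_abs_self _).trans ((f.le_of_opNorm_le hf _).trans_eq (one_mul _))
  rw [map_sub, hfa, norm_sub_rev] at h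
  linarith

lemma sum_mul_le_norm_sum_smul {ι : Type*} (s : Finset ι) {f : StrongDual ℝ X} (hf : ‖f‖ ≤ 1)
    {p c : ι → ℝ} {x : ι → X} (hp : ∀ j ∈ s, 0 ≤ p j) (hc : ∀ j ∈ s, c j ≤ f (x j)) :
    ∑ j ∈ s, p j * c j ≤ ‖∑ j ∈ s, p j • x j‖ :=
  calc ∑ j ∈ s, p j * c j ≤ ∑ j ∈ s, p j * f (x j) :=
        sum_le_sum fun j hj => mul_le_mul_of_nonneg_left (hc j hj) (hp j hj)
    _ = f (∑ j ∈ s, p j • x j) := by simp only [map_sum, map_smul, smul_eq_mul]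
    _ ≤ ‖∑ j ∈ s, p j • x j‖ :=
        (le_abs_self _).trans ((f.le_of_opNorm_le hf _).trans_eq (one_mul _))

end

theorem stmt10_general {X : Type*} [NormedAddCommGroup X] [NormedSpace ℝ X]
    (n : ℕ) (hn : 0 < n) (x : Fin n → X)
    (a : X) (ha : ‖a‖ = 1) (hx : ∀ j, ‖x j - a‖ ≤ 1)
    (p : Fin n → ℝ) (hp : ∀ j, 0 ≤ p j)
    (hpos : 0 < ∑ j, p j * ‖x j‖) :
    ‖∑ j, p j • x j‖ / (∑ j, p j * ‖x j‖) ≥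
      (1 / 2) * (Finset.univ.inf' (Finset.univ_nonempty_iff.mpr ⟨⟨0, hn⟩⟩)
        (fun j => (1 - ‖x j - a‖ ^ 2) / ‖x j‖)) := by
  obtain ⟨f, hf, hfa⟩ := exists_dual_vector ℝ a (by rw [ha]; exact one_ne_zero)
  rw [ha, RCLike.ofReal_one] at hfa
  set m := Finset.univ.inf' (Finset.univ_nonempty_iff.mpr ⟨⟨0, hn⟩⟩)
    (fun j => (1 - ‖x j - a‖ ^ 2) / ‖x j‖)
  have hbound : ∀ j, 1 / 2 * m * ‖x j‖ ≤ f (x j) := by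
    intro j
    have hm : m * ‖x j‖ ≤ 1 - ‖x j - a‖ ^ 2 := by
      refine mul_le_of_le_div₀ ?_ (norm_nonneg _) (inf'_le _ (mem_univ j))
      nlinarith [hx j, norm_nonneg (x j - a)]
    nlinarith [one_sub_norm_sub_le_apply hf.le hfa (x j), hx j, norm_nonneg (x j - a)]
  rw [ge_iff_le, le_div_iff₀ hpos, mul_sum]
  calc ∑ j, 1 / 2 * m * (p j * ‖x j‖) = ∑ j, p j * (1 / 2 * m * ‖x j‖) :=
        sum_congr rfl fun j _ => by ring
    _ ≤ ‖∑ j, p j • x j‖ :=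
        sum_mul_le_norm_sum_smul univ hf.le (fun j _ => hp j) (fun j _ => hbound j)

theorem stmt10 {X : Type*} [NormedAddCommGroup X] [NormedSpace ℝ X]
    (n : ℕ) (hn : 0 < n) (x : Fin n → X) (hx0 : ∀ j, x j ≠ 0)
    (a : X) (ha : ‖a‖ = 1) (hx : ∀ j, ‖x j - a‖ ≤ 1)
    (p : Fin n → ℝ) (hp : ∀ j, 0 ≤ p j) (hp1 : ∑ j, p j = 1)
    (hpos : 0 < ∑ j, p j * ‖x j‖) :
    ‖∑ j, p j • x j‖ / (∑ j, p j * ‖x j‖) ≥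
      (1 / 2) * (Finset.univ.inf' (Finset.univ_nonempty_iff.mpr ⟨⟨0, hn⟩⟩)
        (fun j => (1 - ‖x j - a‖ ^ 2) / ‖x j‖)) :=
  stmt10_general n hn x a ha hx p hp hpos
end

section
/- Let X be a real normed linear space, a a unit vector, and x₁,…,xₙ nonzero vectors with ‖xⱼ − a‖ ≤ 1 for each j. For pⱼ ≥ 0 with Σpⱼ = 1 and Σpⱼ‖xⱼ‖ > 0: ‖Σⱼ pⱼ•xⱼ‖/(Σⱼ pⱼ‖xⱼ‖) ≥ (1/2)(1 − max_j ‖xⱼ − a‖). -/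
theorem stmt11 {X : Type*} [NormedAddCommGroup X] [NormedSpace ℝ X]
    (n : ℕ) (hn : 0 < n) (x : Fin n → X) (hx0 : ∀ j, x j ≠ 0)
    (a : X) (ha : ‖a‖ = 1) (hx : ∀ j, ‖x j - a‖ ≤ 1)
    (p : Fin n → ℝ) (hp : ∀ j, 0 ≤ p j) (hp1 : ∑ j, p j = 1)
    (hpos : 0 < ∑ j, p j * ‖x j‖) :
    ‖∑ j, p j • x j‖ / (∑ j, p j * ‖x j‖) ≥
      (1 / 2) * (1 - Finset.univ.sup' (Finset.univ_nonempty_iff.mpr ⟨⟨0, hn⟩⟩)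
        (fun j => ‖x j - a‖)) := by
  set r := Finset.univ.sup' (Finset.univ_nonempty_iff.mpr ⟨⟨0, hn⟩⟩)
        (fun j => ‖x j - a‖) with hrdef
  have hr1 : r ≤ 1 := Finset.sup'_le _ _ fun j _ => hx j
  have hrj : ∀ j, ‖x j - a‖ ≤ r := fun j => Finset.le_sup' (fun j => ‖x j - a‖) (Finset.mem_univ j)
  have hsum : ∑ j, p j • x j = (∑ j, p j • (x j - a)) + a := by
    simp only [smul_sub, Finset.sum_sub_distrib, ← Finset.sum_smul, hp1, one_smul]
    abel
  have hb : ‖∑ j, p j • (x j - a)‖ ≤ r := by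
    calc ‖∑ j, p j • (x j - a)‖ ≤ ∑ j, ‖p j • (x j - a)‖ := norm_sum_le _ _
      _ ≤ ∑ j : Fin n, p j * r := by
          apply Finset.sum_le_sum
          intro j _
          rw [norm_smul, Real.norm_of_nonneg (hp j)]
          exact mul_le_mul_of_nonneg_left (hrj j) (hp j)
      _ = r := by rw [← Finset.sum_mul, hp1, one_mul]
  have hN : 1 - r ≤ ‖∑ j, p j • x j‖ := by
    have h1 : ‖a‖ ≤ ‖∑ j, p j • x j‖ + ‖∑ j, p j • (x j - a)‖ := by
      calc ‖a‖ = ‖(∑ j, p j • x j) - (∑ j, p j • (x j - a))‖ := by rw [hsum]; congr 1; abel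
        _ ≤ _ := norm_sub_le _ _
    rw [ha] at h1; linarith
  have hS : ∑ j, p j * ‖x j‖ ≤ 2 := by
    calc ∑ j, p j * ‖x j‖ ≤ ∑ j : Fin n, p j * 2 := by
          apply Finset.sum_le_sum
          intro j _
          refine mul_le_mul_of_nonneg_left ?_ (hp j)
          calc ‖x j‖ = ‖(x j - a) + a‖ := by congr 1; abel
            _ ≤ ‖x j - a‖ + ‖a‖ := norm_add_le _ _
            _ ≤ 2 := by rw [ha]; linarith [hx j]
      _ = 2 := by rw [← Finset.sum_mul, hp1, one_mul]
  rw [ge_iff_le, le_div_iff₀ hpos]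
  nlinarith [norm_nonneg (∑ j, p j • x j)]
end

section
/- Let ρ ∈ (0,1), X a real normed linear space, a ∈ X, and x₁,…,xₙ nonzero vectors such that ‖a‖ − ‖xⱼ − a‖ ≥ ρ‖xⱼ‖ for each j. Then for any pⱼ ≥ 0 with Σpⱼ = 1: ‖Σⱼ pⱼ•xⱼ‖ ≥ ρ·Σⱼ pⱼ‖xⱼ‖. -/
theorem stmt17 {X : Type*} [NormedAddCommGroup X] [NormedSpace ℝ X]
    (ρ : ℝ) (hρ0 : 0 < ρ) (hρ1 : ρ < 1) (n : ℕ) (x : Fin n → X) (hx0 : ∀ j, x j ≠ 0)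
    (a : X) (hx : ∀ j, ‖a‖ - ‖x j - a‖ ≥ ρ * ‖x j‖)
    (p : Fin n → ℝ) (hp : ∀ j, 0 ≤ p j) (hp1 : ∑ j, p j = 1) :
    ‖∑ j, p j • x j‖ ≥ ρ * ∑ j, p j * ‖x j‖ := by
  have hsum : (∑ j, p j • x j) - a = ∑ j, p j • (x j - a) := by
    simp only [smul_sub, Finset.sum_sub_distrib, ← Finset.sum_smul, hp1, one_smul]
  have h1 : ‖(∑ j, p j • x j) - a‖ ≤ ∑ j, p j * ‖x j - a‖ := by
    rw [hsum]
    refine (norm_sum_le _ _).trans ?_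
    apply Finset.sum_le_sum
    intro j _
    rw [norm_smul, Real.norm_eq_abs, abs_of_nonneg (hp j)]
  have h2 : ρ * ∑ j, p j * ‖x j‖ ≤ ∑ j, p j * (‖a‖ - ‖x j - a‖) := by
    rw [Finset.mul_sum]
    apply Finset.sum_le_sum
    intro j _
    rw [← mul_assoc, mul_comm ρ (p j), mul_assoc]
    exact mul_le_mul_of_nonneg_left (hx j) (hp j)
  have h3 : ∑ j, p j * (‖a‖ - ‖x j - a‖) = ‖a‖ - ∑ j, p j * ‖x j - a‖ := by
    simp only [mul_sub, Finset.sum_sub_distrib, ← Finset.sum_mul, hp1, one_mul]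
  have h4 : ‖a‖ - ‖(∑ j, p j • x j) - a‖ ≤ ‖∑ j, p j • x j‖ := by
    have := norm_sub_norm_le a (∑ j, p j • x j)
    rw [norm_sub_rev] at this
    linarith
  calc ρ * ∑ j, p j * ‖x j‖ ≤ ‖a‖ - ∑ j, p j * ‖x j - a‖ := by rw [← h3]; exact h2
    _ ≤ ‖a‖ - ‖(∑ j, p j • x j) - a‖ := by linarith
    _ ≤ ‖∑ j, p j • x j‖ := h4
end

section
/- Let X be a real normed linear space, x₁,…,xₙ nonzero vectors, pⱼ ≥ 0 with Σpⱼ = 1, and set x̄ := Σⱼ pⱼ•xⱼ with x̄ ≠ 0. If there exists r > 0 such that ⟨xⱼ, x̄⟩_i ≥ r·‖xⱼ‖·‖x̄‖ for each j, then ‖Σⱼ pⱼ•xⱼ‖ ≥ r·Σⱼ pⱼ‖xⱼ‖. -/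
theorem stmt18 {X : Type*} [NormedAddCommGroup X] [NormedSpace ℝ X]
    (n : ℕ) (x : Fin n → X) (hx0 : ∀ j, x j ≠ 0)
    (p : Fin n → ℝ) (hp : ∀ j, 0 ≤ p j) (hp1 : ∑ j, p j = 1)
    (hbar : (∑ j, p j • x j) ≠ 0)
    (r : ℝ) (hr : 0 < r)
    (h : ∀ j, innerInf (x j) (∑ i, p i • x i) ≥ r * ‖x j‖ * ‖∑ i, p i • x i‖) :
    ‖∑ j, p j • x j‖ ≥ r * ∑ j, p j * ‖x j‖ := by
  rcases Nat.eq_zero_or_pos n with rfl | hn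
  · simp at hp1
  have hne : Nonempty (Fin n) := Fin.pos_iff_nonempty.mp hn
  set a : X := ∑ i, p i • x i with ha
  have hA : 0 < ‖a‖ := norm_pos_iff.mpr hbar
  set A : ℝ := ‖a‖ with hAdef
  set S : ℝ := ∑ j, p j * ‖x j‖ with hS
  have hq : ∀ (v : X) (s : ℝ), (fun s : ℝ => (‖a + s • v‖ ^ 2 - ‖a‖ ^ 2) / (2 * s)) s
      = (‖a + s • v‖ ^ 2 - A ^ 2) / (2 * s) := fun v s => rfl
  -- convexity of s ↦ ‖a + s • v‖ ^ 2
  have hconv : ∀ v : X, ConvexOn ℝ Set.univ (fun s : ℝ => ‖a + s • v‖ ^ 2) := by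
    intro v
    have haff : ConvexOn ℝ Set.univ (fun s : ℝ => ‖a + s • v‖) := by
      have hcm := (convexOn_univ_norm (E := X)).comp_affineMap (AffineMap.lineMap a (a + v))
      have he : (norm ∘ ⇑(AffineMap.lineMap a (a + v))) = fun s : ℝ => ‖a + s • v‖ := by
        ext s
        simp [AffineMap.lineMap_apply, add_comm]
      rw [Set.preimage_univ, he] at hcm
      exact hcm
    have hfe : ((fun s : ℝ => ‖a + s • v‖) ^ 2) = fun s : ℝ => ‖a + s • v‖ ^ 2 := by
      ext s; simp
    rw [← hfe]
    exact haff.pow (fun s _ => norm_nonneg _) 2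
  -- monotonicity of the quotient in s on negatives
  have hmono : ∀ (v : X) (s t : ℝ), s ≤ t → s < 0 → t < 0 →
      (‖a + s • v‖ ^ 2 - A ^ 2) / (2 * s) ≤ (‖a + t • v‖ ^ 2 - A ^ 2) / (2 * t) := by
    intro v s t hst hs ht
    have hsec := (hconv v).secant_mono (a := 0) (x := s) (y := t)
      (Set.mem_univ _) (Set.mem_univ _) (Set.mem_univ _) (ne_of_lt hs) (ne_of_lt ht) hst
    simp only [zero_smul, add_zero, sub_zero] at hsec
    rw [← hAdef] at hsec
    rw [show (2:ℝ) * s = s * 2 by ring, show (2:ℝ) * t = t * 2 by ring,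
      ← div_div, ← div_div]
    linarith
  -- key bound: for every negative s, the weighted sum of quotients is ≤ A ^ 2
  have hkey : ∀ s : ℝ, s < 0 →
      ∑ j, p j * ((‖a + s • x j‖ ^ 2 - A ^ 2) / (2 * s)) ≤ A ^ 2 := by
    intro s hs
    have hjensen : (∑ j, p j * ‖a + s • x j‖) ^ 2 ≤ ∑ j, p j * ‖a + s • x j‖ ^ 2 := by
      have hsq : ConvexOn ℝ Set.univ (fun t : ℝ => t ^ 2) :=
        Even.convexOn_pow (by norm_num)
      have := hsq.map_sum_le (t := Finset.univ) (w := p) (p := fun j => ‖a + s • x j‖)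
        (fun j _ => hp j) hp1 (fun j _ => Set.mem_univ _)
      simpa [smul_eq_mul] using this
    have hcomb : (1 + s) • a = ∑ j, p j • (a + s • x j) := by
      have h1 : ∑ j, p j • (a + s • x j) = (∑ j, p j) • a + s • ∑ j, p j • x j := by
        rw [Finset.sum_smul, Finset.smul_sum]
        rw [← Finset.sum_add_distrib]
        congr 1; ext j
        rw [smul_add]
        congr 1
        rw [smul_comm]
      rw [h1, hp1, ← ha, add_smul, one_smul]
    have htri : |1 + s| * A ≤ ∑ j, p j * ‖a + s • x j‖ := by
      have := norm_sum_le_of_le Finset.univ (f := fun j => p j • (a + s • x j))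
        (n := fun j => p j * ‖a + s • x j‖) (fun j _ => by
          rw [norm_smul, Real.norm_eq_abs, abs_of_nonneg (hp j)])
      rw [← hcomb] at this
      simpa [norm_smul, Real.norm_eq_abs, hAdef] using this
    have hnn : (1 + 2 * s) * A ^ 2 ≤ ∑ j, p j * ‖a + s • x j‖ ^ 2 := by
      have h0 : 0 ≤ ∑ j, p j * ‖a + s • x j‖ :=
        Finset.sum_nonneg fun j _ => mul_nonneg (hp j) (norm_nonneg _)
      have h3 := mul_self_le_mul_self (by positivity) htri
      nlinarith [sq_abs (1 + s), hjensen, sq_nonneg s, sq_nonneg A, hA.le]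
    have hsum : ∑ j, p j * ((‖a + s • x j‖ ^ 2 - A ^ 2) / (2 * s))
        = ((∑ j, p j * ‖a + s • x j‖ ^ 2) - A ^ 2) / (2 * s) := by
      have he : ∑ j, p j * ((‖a + s • x j‖ ^ 2 - A ^ 2) / (2 * s))
          = ∑ j, (p j * ‖a + s • x j‖ ^ 2 - p j * A ^ 2) / (2 * s) :=
        Finset.sum_congr rfl fun j _ => by ring
      rw [he, ← Finset.sum_div, Finset.sum_sub_distrib, ← Finset.sum_mul, hp1, one_mul]
    rw [hsum, div_le_iff_of_neg (by linarith)]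
    nlinarith
  -- extraction of a common negative s from the sSup hypotheses
  have hfin : ∀ ε : ℝ, 0 < ε → r * S * A ≤ A ^ 2 + ε := by
    intro ε hε
    have hex : ∀ j, ∃ s : ℝ, s < 0 ∧
        r * ‖x j‖ * A - ε ≤ (‖a + s • x j‖ ^ 2 - A ^ 2) / (2 * s) := by
      intro j
      have hlt : r * ‖x j‖ * A - ε < innerInf (x j) a :=
        lt_of_lt_of_le (sub_lt_self _ hε) (h j)
      have hne' : ((fun s : ℝ => (‖a + s • x j‖ ^ 2 - ‖a‖ ^ 2) / (2 * s)) '' Set.Iio 0).Nonempty :=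
        ⟨_, Set.mem_image_of_mem _ (show (-1 : ℝ) ∈ Set.Iio 0 by norm_num)⟩
      obtain ⟨y, hy, hylt⟩ := exists_lt_of_lt_csSup hne' hlt
      obtain ⟨s, hs, rfl⟩ := hy
      exact ⟨s, hs, hylt.le⟩
    choose sj hsj hqj using hex
    set s0 : ℝ := Finset.univ.sup' Finset.univ_nonempty sj with hs0
    have hs0neg : s0 < 0 := (Finset.sup'_lt_iff _).mpr fun j _ => hsj j
    have hle : ∀ j, r * ‖x j‖ * A - ε ≤ (‖a + s0 • x j‖ ^ 2 - A ^ 2) / (2 * s0) := fun j =>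
      (hqj j).trans (hmono (x j) (sj j) s0 (Finset.le_sup' sj (Finset.mem_univ j))
        (hsj j) hs0neg)
    have hsum1 : ∑ j, p j * (r * ‖x j‖ * A - ε)
        ≤ ∑ j, p j * ((‖a + s0 • x j‖ ^ 2 - A ^ 2) / (2 * s0)) :=
      Finset.sum_le_sum fun j _ => mul_le_mul_of_nonneg_left (hle j) (hp j)
    have hlhs : ∑ j, p j * (r * ‖x j‖ * A - ε) = r * S * A - ε := by
      calc ∑ j, p j * (r * ‖x j‖ * A - ε)
          = ∑ j, ((p j * ‖x j‖) * (r * A) - p j * ε) :=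
            Finset.sum_congr rfl (fun j _ => by ring)
        _ = (∑ j, p j * ‖x j‖) * (r * A) - (∑ j, p j) * ε := by
            rw [Finset.sum_sub_distrib, Finset.sum_mul, Finset.sum_mul]
        _ = r * S * A - ε := by rw [hp1, ← hS]; ring
    linarith [hsum1, hkey s0 hs0neg, hlhs]
  have hfinal : r * S * A ≤ A ^ 2 := le_of_forall_pos_le_add hfin
  have : r * S * A ≤ A * A := by nlinarith
  exact le_of_mul_le_mul_right this hA
end
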